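/- arXiv:2402.15392 — 4 statements merged into one kernel-verified Lean document; each statement's English description precedes it below -/
import Mathlib

section
/- The normalized Euclidean distance d₂(x,y) := ‖x−y‖₂ / max{‖x‖₂, ‖y‖₂} (with d₂(x,y) := 0 when both x and y are zero) satisfies the triangle inequality: for all x, y, z ∈ ℝᵏ, d₂(x,y) ≤ d₂(x,z) + d₂(z,y). -/
lemma stmt0_aux (k : ℕ) (x y z : EuclideanSpace ℝ (Fin k)) (hxy : ‖y‖ ≤ ‖x‖) :
    ‖x - y‖ / max ‖x‖ ‖y‖ ≤ ‖x - z‖ / max ‖x‖ ‖z‖ + ‖z - y‖ / max ‖z‖ ‖y‖ := by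
  rcases eq_or_lt_of_le (norm_nonneg x) with hx0 | hx0
  · -- ‖x‖ = 0, so x = 0 and y = 0
    have hx : x = 0 := by simpa using hx0.symm
    have hy : y = 0 := by
      have : ‖y‖ = 0 := le_antisymm (hx0 ▸ hxy) (norm_nonneg y)
      simpa using this
    subst hx; subst hy
    simp
    positivity
  rcases le_or_gt ‖z‖ ‖x‖ with hzx | hzx
  · -- max ‖x‖ ‖y‖ = ‖x‖, max ‖x‖ ‖z‖ = ‖x‖
    rw [max_eq_left hxy, max_eq_left hzx]
    rcases eq_or_lt_of_le (le_max_right ‖z‖ ‖y‖ |>.trans' (norm_nonneg y)) with hm | hm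
    · -- max ‖z‖ ‖y‖ = 0 : z = 0, y = 0
      have hz : z = 0 := by
        have : ‖z‖ = 0 := le_antisymm (hm ▸ le_max_left _ _) (norm_nonneg z)
        simpa using this
      have hy : y = 0 := by
        have : ‖y‖ = 0 := le_antisymm (hm ▸ le_max_right _ _) (norm_nonneg y)
        simpa using this
      subst hz; subst hy; simp
    · have h1 : ‖z - y‖ / ‖x‖ ≤ ‖z - y‖ / max ‖z‖ ‖y‖ :=
        div_le_div_of_nonneg_left (norm_nonneg _) hm (le_trans (max_le hzx hxy) le_rfl)
      calc ‖x - y‖ / ‖x‖ ≤ (‖x - z‖ + ‖z - y‖) / ‖x‖ := by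
            gcongr
            simpa using norm_sub_le_norm_sub_add_norm_sub x z y
        _ = ‖x - z‖ / ‖x‖ + ‖z - y‖ / ‖x‖ := add_div _ _ _
        _ ≤ ‖x - z‖ / ‖x‖ + ‖z - y‖ / max ‖z‖ ‖y‖ := by linarith
  · -- ‖x‖ < ‖z‖ : use Ptolemy
    have hz0 : (0:ℝ) < ‖z‖ := hx0.trans hzx
    rw [max_eq_left hxy, max_eq_right hzx.le, max_eq_left (hxy.trans hzx.le)]
    have hpt := EuclideanGeometry.mul_dist_le_mul_dist_add_mul_dist x z y (0 : EuclideanSpace ℝ (Fin k))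
    simp only [dist_eq_norm, sub_zero] at hpt
    -- hpt : ‖x - y‖ * ‖z‖ ≤ ‖x - z‖ * ‖y‖ + ‖z - y‖ * ‖x‖
    have key : ‖x - y‖ * ‖z‖ ≤ (‖x - z‖ + ‖z - y‖) * ‖x‖ := by
      calc ‖x - y‖ * ‖z‖ ≤ ‖x - z‖ * ‖y‖ + ‖z - y‖ * ‖x‖ := hpt
        _ ≤ ‖x - z‖ * ‖x‖ + ‖z - y‖ * ‖x‖ := by gcongr
        _ = (‖x - z‖ + ‖z - y‖) * ‖x‖ := by ring
    calc ‖x - y‖ / ‖x‖ ≤ (‖x - z‖ + ‖z - y‖) / ‖z‖ := by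
          rw [div_le_div_iff₀ hx0 hz0]; exact key
      _ = ‖x - z‖ / ‖z‖ + ‖z - y‖ / ‖z‖ := add_div _ _ _

/-- The normalized Euclidean distance `d₂(x,y) = ‖x−y‖₂ / max{‖x‖₂,‖y‖₂}`
(which is `0` when `x = y = 0`, since `0/0 = 0` in Lean) satisfies the
triangle inequality on `ℝᵏ`. -/
theorem stmt0 (k : ℕ) (x y z : EuclideanSpace ℝ (Fin k)) :
    ‖x - y‖ / max ‖x‖ ‖y‖ ≤ ‖x - z‖ / max ‖x‖ ‖z‖ + ‖z - y‖ / max ‖z‖ ‖y‖ := by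
  rcases le_total ‖y‖ ‖x‖ with h | h
  · exact stmt0_aux k x y z h
  · have := stmt0_aux k y x z h
    rw [norm_sub_rev y x, max_comm ‖y‖ ‖x‖] at this
    rw [norm_sub_rev y z, norm_sub_rev z x, max_comm ‖y‖ ‖z‖, max_comm ‖z‖ ‖x‖] at this
    linarith
end

section
/- The normalized Euclidean distance d₂(x,y) := ‖x−y‖₂ / max{‖x‖₂, ‖y‖₂} (with d₂(0,0) := 0) is a metric on ℝᵏ: it is nonnegative, symmetric, vanishes exactly when x = y, and satisfies the triangle inequality. -/
/-!
If `‖z‖ ≤ max ‖x‖ ‖y‖`, the denominators `max ‖x‖ ‖z‖` and `max ‖z‖ ‖y‖` are at most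
`max ‖x‖ ‖y‖`, so the triangle inequality for the norm suffices. If `‖z‖` is larger, Ptolemy's
inequality for the quadrangle `x z y 0`, `‖x - y‖ ‖z‖ ≤ ‖x - z‖ ‖y‖ + ‖z - y‖ ‖x‖`, gives the bound
after dividing by `‖z‖ max ‖x‖ ‖y‖`.
-/

/-- The normalized Euclidean distance on `ℝᵏ`. When `x = y = 0` both numerator and
denominator are `0` and the value is `0` (Lean's `0/0 = 0` convention). -/
noncomputable def normEuclDist (k : ℕ) (x y : EuclideanSpace ℝ (Fin k)) : ℝ :=
  ‖x - y‖ / max ‖x‖ ‖y‖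

noncomputable def normalizedDist {E : Type*} [Norm E] [Sub E] (x y : E) : ℝ :=
  ‖x - y‖ / max ‖x‖ ‖y‖

theorem max_norm_eq_zero_iff {E : Type*} [NormedAddCommGroup E] {x y : E} :
    max ‖x‖ ‖y‖ = 0 ↔ x = 0 ∧ y = 0 := by
  simp only [le_antisymm_iff, max_le_iff, norm_le_zero_iff, norm_nonneg, le_max_iff, true_or,
    and_true]

namespace normalizedDist

section NormedGroup

variable {E : Type*} [NormedAddCommGroup E]

theorem nonneg (x y : E) : 0 ≤ normalizedDist x y :=
  div_nonneg (norm_nonneg _) (le_max_of_le_left (norm_nonneg _))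

theorem symm (x y : E) : normalizedDist x y = normalizedDist y x := by
  rw [normalizedDist, normalizedDist, norm_sub_rev, max_comm]

@[simp]
theorem self (x : E) : normalizedDist x x = 0 := by
  simp [normalizedDist]

theorem eq_zero_iff {x y : E} : normalizedDist x y = 0 ↔ x = y := by
  refine ⟨fun h => ?_, fun h => h ▸ self x⟩
  rcases div_eq_zero_iff.mp h with h | h
  · exact sub_eq_zero.mp (norm_eq_zero.mp h)
  · obtain ⟨rfl, rfl⟩ := max_norm_eq_zero_iff.mp h
    rfl

theorem norm_sub_div_le_of_max_le {x y : E} {m : ℝ} (hm : max ‖x‖ ‖y‖ ≤ m) :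
    ‖x - y‖ / m ≤ normalizedDist x y := by
  rcases (le_max_of_le_left (norm_nonneg x) : 0 ≤ max ‖x‖ ‖y‖).eq_or_lt with h | h
  · obtain ⟨rfl, rfl⟩ := max_norm_eq_zero_iff.mp h.symm
    simp
  · exact div_le_div_of_nonneg_left (norm_nonneg _) h hm

end NormedGroup

section InnerProductSpace

variable {E : Type*} [NormedAddCommGroup E] [InnerProductSpace ℝ E]

theorem norm_sub_mul_max_le (x y z : E) :
    ‖x - y‖ * max (max ‖x‖ ‖y‖) ‖z‖ ≤ (‖x - z‖ + ‖z - y‖) * max ‖x‖ ‖y‖ := by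
  rcases le_total ‖z‖ (max ‖x‖ ‖y‖) with hz | hz
  · rw [max_eq_left hz]
    gcongr
    exact norm_sub_le_norm_sub_add_norm_sub x z y
  · have ptolemy := EuclideanGeometry.mul_dist_le_mul_dist_add_mul_dist x z y 0
    simp only [dist_eq_norm, sub_zero] at ptolemy
    rw [max_eq_right hz, add_mul]
    refine ptolemy.trans (add_le_add ?_ ?_) <;> gcongr
    exacts [le_max_right _ _, le_max_left _ _]

theorem triangle (x y z : E) :
    normalizedDist x y ≤ normalizedDist x z + normalizedDist z y := by
  rcases eq_or_ne x y with rfl | hxy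
  · simpa only [self] using add_nonneg (nonneg x z) (nonneg z x)
  have hM : 0 < max ‖x‖ ‖y‖ := (le_max_of_le_left (norm_nonneg x)).lt_of_ne'
    fun h => hxy ((max_norm_eq_zero_iff.mp h).1.trans (max_norm_eq_zero_iff.mp h).2.symm)
  set N := max (max ‖x‖ ‖y‖) ‖z‖
  have hN : 0 < N := hM.trans_le (le_max_left _ _)
  calc normalizedDist x y ≤ (‖x - z‖ + ‖z - y‖) / N :=
        (div_le_div_iff₀ hM hN).mpr (norm_sub_mul_max_le x y z)
    _ = ‖x - z‖ / N + ‖z - y‖ / N := add_div _ _ _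
    _ ≤ normalizedDist x z + normalizedDist z y := by
        gcongr
        · exact norm_sub_div_le_of_max_le
            (max_le ((le_max_left _ _).trans (le_max_left _ _)) (le_max_right _ _))
        · exact norm_sub_div_le_of_max_le
            (max_le (le_max_right _ _) ((le_max_right _ _).trans (le_max_left _ _)))

end InnerProductSpace

end normalizedDist

theorem normEuclDist_eq_normalizedDist (k : ℕ) : normEuclDist k = normalizedDist := rfl

/-- The normalized Euclidean distance is a metric on `ℝᵏ`: nonnegative, symmetric,
vanishing exactly on the diagonal, and satisfying the triangle inequality. -/
theorem stmt1 (k : ℕ) :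
    (∀ x y : EuclideanSpace ℝ (Fin k), 0 ≤ normEuclDist k x y) ∧
    (∀ x y : EuclideanSpace ℝ (Fin k), normEuclDist k x y = normEuclDist k y x) ∧
    (∀ x y : EuclideanSpace ℝ (Fin k), normEuclDist k x y = 0 ↔ x = y) ∧
    (∀ x y z : EuclideanSpace ℝ (Fin k),
      normEuclDist k x y ≤ normEuclDist k x z + normEuclDist k z y) := by
  rw [normEuclDist_eq_normalizedDist]
  exact ⟨normalizedDist.nonneg, normalizedDist.symm, fun _ _ => normalizedDist.eq_zero_iff,
    normalizedDist.triangle⟩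
end

section
/- Let a, b, c, d be positive reals with 2bc > e. Then every real x with x ≥ 2a + 3b·ln(2bc) + d/c satisfies x ≥ a + b·ln(cx + d). -/
/-- Lambert-W-type inversion lemma: if `a,b,c,d > 0` with `2bc > e`, then every
`x ≥ 2a + 3b·ln(2bc) + d/c` satisfies `x ≥ a + b·ln(cx + d)`. -/
theorem stmt7 (a b c d : ℝ) (ha : 0 < a) (hb : 0 < b) (hc : 0 < c) (hd : 0 < d)
    (h : Real.exp 1 < 2 * b * c) (x : ℝ)
    (hx : 2 * a + 3 * b * Real.log (2 * b * c) + d / c ≤ x) :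
    a + b * Real.log (c * x + d) ≤ x := by
  set L := Real.log (2 * b * c) with hLdef
  have hbc : 0 < 2 * b * c := by positivity
  have hL : 1 ≤ L := (Real.le_log_iff_exp_le hbc).2 h.le
  have hbL : b ≤ b * L := by nlinarith
  have hdc : 0 < d / c := div_pos hd hc
  have hxpos : 0 < x := by nlinarith
  have hcx : 0 < c * x + d := by positivity
  have hsplit : Real.log (c * x + d) = L + Real.log ((c * x + d) / (2 * b * c)) := by
    rw [Real.log_div hcx.ne' hbc.ne']; ring
  have hlog2 : Real.log ((c * x + d) / (2 * b * c)) ≤ (c * x + d) / (2 * b * c) - 1 :=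
    Real.log_le_sub_one_of_pos (div_pos hcx hbc)
  have h1 : b * Real.log ((c * x + d) / (2 * b * c)) ≤ x / 2 + (d / c) / 2 - b := by
    have heq : b * ((c * x + d) / (2 * b * c) - 1) = x / 2 + (d / c) / 2 - b := by
      field_simp
    nlinarith [mul_le_mul_of_nonneg_left hlog2 hb.le]
  rw [hsplit]
  nlinarith
end

section
/- Performance difference lemma (finite horizon): for any two policies π and π' in a finite-horizon MDP, J(π'; μ₀, p, r) − J(π; μ₀, p, r) = Σ_{h=1}^{H} E_{(s,a) ~ ρ^{p,π'}_h} [A^π_h(s,a)], where A^π_h(s,a) := Q^π_h(s,a) − V^π_h(s) is the advantage function of π. -/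
open Finset

/-- `QpolAux p π r t h s a` is the `Q`-function of policy `π` at stage `h`,
state `s`, action `a`, when `t` further stages remain after stage `h`. -/
noncomputable def QpolAux {S A : Type*} [Fintype S] [Fintype A]
    (p : ℕ → S → A → S → ℝ) (π : ℕ → S → A → ℝ) (r : ℕ → S → A → ℝ) :
    ℕ → ℕ → S → A → ℝ
  | 0, h, s, a => r h s a
  | t + 1, h, s, a =>
      r h s a + ∑ s' : S, p h s a s' *
        ∑ a' : A, π (h + 1) s' a' * QpolAux p π r t (h + 1) s' a'

/-- `Q^π_h` in a finite-horizon MDP with horizon `H` (stages `0, …, H−1`). -/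
noncomputable def Qpol {S A : Type*} [Fintype S] [Fintype A] (H : ℕ)
    (p : ℕ → S → A → S → ℝ) (π : ℕ → S → A → ℝ) (r : ℕ → S → A → ℝ)
    (h : ℕ) : S → A → ℝ :=
  QpolAux p π r (H - 1 - h) h

/-- `V^π_h(s) = Σ_a π_h(a|s) Q^π_h(s,a)`. -/
noncomputable def Vpol {S A : Type*} [Fintype S] [Fintype A] (H : ℕ)
    (p : ℕ → S → A → S → ℝ) (π : ℕ → S → A → ℝ) (r : ℕ → S → A → ℝ)
    (h : ℕ) (s : S) : ℝ :=
  ∑ a : A, π h s a * Qpol H p π r h s a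

/-- State visitation distribution `ρ^{p,π}_h(s)` from initial distribution `μ0`. -/
noncomputable def visit {S A : Type*} [Fintype S] [Fintype A] (μ0 : S → ℝ)
    (p : ℕ → S → A → S → ℝ) (π : ℕ → S → A → ℝ) : ℕ → S → ℝ
  | 0, s => μ0 s
  | h + 1, s' => ∑ s : S, ∑ a : A, visit μ0 p π h s * π h s a * p h s a s'

/-- Expected return `J(π; μ0, p, r)` over horizon `H`. -/
noncomputable def Jval {S A : Type*} [Fintype S] [Fintype A] (H : ℕ) (μ0 : S → ℝ)
    (p : ℕ → S → A → S → ℝ) (π : ℕ → S → A → ℝ) (r : ℕ → S → A → ℝ) : ℝ :=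
  ∑ s : S, μ0 s * Vpol H p π r 0 s

/-- A stochastic policy: each `π_h(·|s)` is a probability vector. -/
def IsPolicy {S A : Type*} [Fintype A] (π : ℕ → S → A → ℝ) : Prop :=
  ∀ h s, (∀ a, 0 ≤ π h s a) ∧ ∑ a : A, π h s a = 1

noncomputable def Vaux {S A : Type*} [Fintype S] [Fintype A]
    (p : ℕ → S → A → S → ℝ) (π : ℕ → S → A → ℝ) (r : ℕ → S → A → ℝ)
    (t h : ℕ) (s : S) : ℝ :=
  ∑ a : A, π h s a * QpolAux p π r t h s a

lemma helperQ {S A : Type*} [Fintype S] [Fintype A] (μ0 : S → ℝ)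
    (p : ℕ → S → A → S → ℝ) (π' π'' : ℕ → S → A → ℝ) (r : ℕ → S → A → ℝ)
    (t h : ℕ) :
    ∑ s : S, ∑ a : A, visit μ0 p π' h s * π' h s a * QpolAux p π'' r (t+1) h s a
    = (∑ s : S, ∑ a : A, visit μ0 p π' h s * π' h s a * r h s a)
      + ∑ s' : S, visit μ0 p π' (h+1) s' * Vaux p π'' r t (h+1) s' := by
  have expand : ∀ s a, visit μ0 p π' h s * π' h s a * QpolAux p π'' r (t+1) h s a
      = visit μ0 p π' h s * π' h s a * r h s a
        + ∑ s' : S, visit μ0 p π' h s * π' h s a * p h s a s' * Vaux p π'' r t (h+1) s' := by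
    intro s a
    show _ * (r h s a + ∑ s' : S, p h s a s' *
        ∑ a' : A, π'' (h+1) s' a' * QpolAux p π'' r t (h+1) s' a') = _
    rw [mul_add, Finset.mul_sum]
    congr 1
    apply Finset.sum_congr rfl; intro s' _
    rw [Vaux]; ring
  simp only [expand, Finset.sum_add_distrib]
  congr 1
  have rhs : ∑ s' : S, visit μ0 p π' (h+1) s' * Vaux p π'' r t (h+1) s'
      = ∑ s' : S, ∑ s : S, ∑ a : A,
          visit μ0 p π' h s * π' h s a * p h s a s' * Vaux p π'' r t (h+1) s' := by
    apply Finset.sum_congr rfl; intro s' _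
    show (∑ s : S, ∑ a : A, visit μ0 p π' h s * π' h s a * p h s a s') * _ = _
    rw [Finset.sum_mul]
    exact Finset.sum_congr rfl fun s _ => Finset.sum_mul ..
  rw [rhs]
  rw [show (∑ s' : S, ∑ s : S, ∑ a : A,
        visit μ0 p π' h s * π' h s a * p h s a s' * Vaux p π'' r t (h+1) s')
      = ∑ s : S, ∑ s' : S, ∑ a : A,
        visit μ0 p π' h s * π' h s a * p h s a s' * Vaux p π'' r t (h+1) s'
    from Finset.sum_comm]
  exact Finset.sum_congr rfl fun s _ => Finset.sum_comm

lemma mainPDL {S A : Type*} [Fintype S] [Fintype A] (μ0 : S → ℝ)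
    (p : ℕ → S → A → S → ℝ) (π π' : ℕ → S → A → ℝ) (r : ℕ → S → A → ℝ)
    (hπ' : ∀ h s, ∑ a : A, π' h s a = 1) :
    ∀ t h : ℕ,
    (∑ s : S, visit μ0 p π' h s * Vaux p π' r t h s)
      - (∑ s : S, visit μ0 p π' h s * Vaux p π r t h s)
    = ∑ k ∈ Finset.range (t+1), ∑ s : S, ∑ a : A,
        visit μ0 p π' (h+k) s * π' (h+k) s a *
          (QpolAux p π r (t-k) (h+k) s a - Vaux p π r (t-k) (h+k) s) := by
  intro t
  induction t with
  | zero =>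
    intro h
    simp only [Nat.zero_add, Finset.range_one, Finset.sum_singleton, Nat.add_zero, Nat.zero_sub]
    rw [← Finset.sum_sub_distrib]
    apply Finset.sum_congr rfl; intro s _
    have h1 : ∑ a : A, visit μ0 p π' h s * π' h s a *
        (QpolAux p π r 0 h s a - Vaux p π r 0 h s)
      = visit μ0 p π' h s * (∑ a : A, π' h s a * QpolAux p π r 0 h s a)
        - visit μ0 p π' h s * Vaux p π r 0 h s * (∑ a : A, π' h s a) := by
      rw [Finset.mul_sum, Finset.mul_sum, ← Finset.sum_sub_distrib]
      apply Finset.sum_congr rfl; intro a _; ring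
    rw [h1, hπ', mul_one]
    have h2 : Vaux p π' r 0 h s = ∑ a : A, π' h s a * QpolAux p π r 0 h s a := by
      simp [Vaux, QpolAux]
    rw [h2]
  | succ t ih =>
    intro h
    rw [Finset.sum_range_succ']
    have hshift : ∀ k ∈ Finset.range (t+1),
        (∑ s : S, ∑ a : A, visit μ0 p π' (h+(k+1)) s * π' (h+(k+1)) s a *
          (QpolAux p π r (t+1-(k+1)) (h+(k+1)) s a - Vaux p π r (t+1-(k+1)) (h+(k+1)) s))
        = ∑ s : S, ∑ a : A, visit μ0 p π' ((h+1)+k) s * π' ((h+1)+k) s a *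
          (QpolAux p π r (t-k) ((h+1)+k) s a - Vaux p π r (t-k) ((h+1)+k) s) := by
      intro k _
      have e1 : h + (k+1) = (h+1) + k := by omega
      have e2 : t + 1 - (k+1) = t - k := by omega
      rw [e1, e2]
    rw [Finset.sum_congr rfl hshift, ← ih (h+1)]
    -- Now the k = 0 term and the LHS
    simp only [Nat.add_zero, Nat.sub_zero]
    have hA' : ∑ s : S, visit μ0 p π' h s * Vaux p π' r (t+1) h s
        = (∑ s : S, ∑ a : A, visit μ0 p π' h s * π' h s a * r h s a)
          + ∑ s' : S, visit μ0 p π' (h+1) s' * Vaux p π' r t (h+1) s' := by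
      rw [← helperQ]
      apply Finset.sum_congr rfl; intro s _
      rw [Vaux, Finset.mul_sum]
      apply Finset.sum_congr rfl; intro a _; ring
    have hC : ∑ s : S, ∑ a : A, visit μ0 p π' h s * π' h s a *
        (QpolAux p π r (t+1) h s a - Vaux p π r (t+1) h s)
        = ((∑ s : S, ∑ a : A, visit μ0 p π' h s * π' h s a * r h s a)
            + ∑ s' : S, visit μ0 p π' (h+1) s' * Vaux p π r t (h+1) s')
          - ∑ s : S, visit μ0 p π' h s * Vaux p π r (t+1) h s := by
      rw [← helperQ μ0 p π' π r t h, ← Finset.sum_sub_distrib]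
      apply Finset.sum_congr rfl; intro s _
      have : ∑ a : A, visit μ0 p π' h s * π' h s a *
          (QpolAux p π r (t+1) h s a - Vaux p π r (t+1) h s)
        = (∑ a : A, visit μ0 p π' h s * π' h s a * QpolAux p π r (t+1) h s a)
          - visit μ0 p π' h s * Vaux p π r (t+1) h s * (∑ a : A, π' h s a) := by
        rw [Finset.mul_sum, ← Finset.sum_sub_distrib]
        apply Finset.sum_congr rfl; intro a _; ring
      rw [this, hπ', mul_one]
    rw [hA', hC]
    ring

/-- Performance difference lemma (finite horizon): for any two policies `π, π'`,
`J(π') − J(π) = Σ_{h<H} E_{(s,a)~ρ^{p,π'}_h}[A^π_h(s,a)]`, where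
`A^π_h(s,a) = Q^π_h(s,a) − V^π_h(s)` is the advantage of `π` and the state-action
visitation puts mass `ρ^{p,π'}_h(s)·π'_h(a|s)` on `(s,a)`. -/
theorem stmt12 {S A : Type*} [Fintype S] [Fintype A] (H : ℕ) (hH : 1 ≤ H)
    (μ0 : S → ℝ) (hμ0 : (∀ s, 0 ≤ μ0 s) ∧ ∑ s : S, μ0 s = 1)
    (p : ℕ → S → A → S → ℝ)
    (hp : ∀ h s a, (∀ s', 0 ≤ p h s a s') ∧ ∑ s' : S, p h s a s' = 1)
    (r : ℕ → S → A → ℝ) (π π' : ℕ → S → A → ℝ)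
    (hπ : IsPolicy π) (hπ' : IsPolicy π') :
    Jval H μ0 p π' r - Jval H μ0 p π r =
      ∑ h ∈ Finset.range H, ∑ s : S, ∑ a : A,
        visit μ0 p π' h s * π' h s a *
          (Qpol H p π r h s a - Vpol H p π r h s) := by
  have key := mainPDL μ0 p π π' r (fun h s => (hπ' h s).2) (H-1) 0
  have h0 : ∀ (σ : ℕ → S → A → ℝ), Jval H μ0 p σ r
      = ∑ s : S, visit μ0 p π' 0 s * Vaux p σ r (H-1) 0 s := by
    intro σ
    apply Finset.sum_congr rfl; intro s _
    simp [Jval, Vpol, Qpol, Vaux, visit]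
  have hH1 : H - 1 + 1 = H := by omega
  rw [h0 π', h0 π, key, hH1]
  apply Finset.sum_congr rfl; intro k hk
  apply Finset.sum_congr rfl; intro s _
  apply Finset.sum_congr rfl; intro a _
  simp [Qpol, Vpol, Vaux]
end
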